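/- arXiv:1609.00694 — 11 statements merged into one kernel-verified Lean document; each statement's English description precedes it below -/
import Mathlib

section
/- Let A be a real m×n matrix, let x, s ∈ ℝⁿ have all components positive, and set μ = xᵀs/n. Suppose p_x, p_s, q_x, q_s, ẋ, ṡ ∈ ℝⁿ and p_λ, q_λ ∈ ℝᵐ satisfy: A p_x = 0, Aᵀ p_λ + p_s = 0, s ∘ p_x + x ∘ p_s = μ e; and A q_x = 0, Aᵀ q_λ + q_s = 0, s ∘ q_x + x ∘ q_s = −2 ẋ ∘ ṡ. Then: q_xᵀ p_s = 0, q_sᵀ p_x = 0, q_xᵀ q_s = 0, p_xᵀ p_s = 0, sᵀ p_x + xᵀ p_s = n μ, and sᵀ q_x + xᵀ q_s = −2 ẋᵀṡ. -/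
open Matrix

lemma aux_orth {m n : ℕ} (A : Matrix (Fin m) (Fin n) ℝ)
    (u v : Fin n → ℝ) (w : Fin m → ℝ)
    (h1 : A.mulVec u = 0) (h2 : Aᵀ.mulVec w + v = 0) :
    u ⬝ᵥ v = 0 := by
  have hv : v = -(Aᵀ.mulVec w) := eq_neg_of_add_eq_zero_right h2
  rw [hv, dotProduct_neg, Matrix.dotProduct_mulVec, Matrix.vecMul_transpose, h1]
  simp

/-- Lemma 3.2: relations satisfied by the decomposition `(p_x, p_λ, p_s)`,
`(q_x, q_λ, q_s)` of the second derivative of the search arc. -/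
theorem arc_second_derivative_decomposition_relations {m n : ℕ}
    (A : Matrix (Fin m) (Fin n) ℝ)
    (x s px ps qx qs xd sd : Fin n → ℝ) (pl ql : Fin m → ℝ) (μ : ℝ)
    (hx : ∀ i, 0 < x i) (hs : ∀ i, 0 < s i)
    (hμ : μ = x ⬝ᵥ s / n)
    (hp1 : A.mulVec px = 0)
    (hp2 : Aᵀ.mulVec pl + ps = 0)
    (hp3 : ∀ i, s i * px i + x i * ps i = μ)
    (hq1 : A.mulVec qx = 0)
    (hq2 : Aᵀ.mulVec ql + qs = 0)
    (hq3 : ∀ i, s i * qx i + x i * qs i = -2 * (xd i * sd i)) :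
    qx ⬝ᵥ ps = 0 ∧ qs ⬝ᵥ px = 0 ∧ qx ⬝ᵥ qs = 0 ∧ px ⬝ᵥ ps = 0 ∧
    s ⬝ᵥ px + x ⬝ᵥ ps = n * μ ∧
    s ⬝ᵥ qx + x ⬝ᵥ qs = -2 * (xd ⬝ᵥ sd) := by
  refine ⟨aux_orth A qx ps pl hq1 hp2, ?_, aux_orth A qx qs ql hq1 hq2,
    aux_orth A px ps pl hp1 hp2, ?_, ?_⟩
  · rw [dotProduct_comm]; exact aux_orth A px qs ql hp1 hq2
  · have : s ⬝ᵥ px + x ⬝ᵥ ps = ∑ i, (s i * px i + x i * ps i) := by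
      simp [dotProduct, Finset.sum_add_distrib]
    rw [this]
    simp [hp3, mul_comm]
  · have : s ⬝ᵥ qx + x ⬝ᵥ qs = ∑ i, (s i * qx i + x i * qs i) := by
      simp [dotProduct, Finset.sum_add_distrib]
    rw [this]
    simp [hq3, dotProduct, Finset.mul_sum]
end

section
/- Let A be a real m×n matrix, b ∈ ℝᵐ, c ∈ ℝⁿ. Suppose sequences x^k, s^k ∈ ℝⁿ, λ^k ∈ ℝᵐ and angles α_k ∈ ℝ satisfy, for every k ≥ 0: x^{k+1} = x^k − ẋ^k sin(α_k) + ẍ^k (1 − cos(α_k)), λ^{k+1} = λ^k − λ̇^k sin(α_k) + λ̈^k (1 − cos(α_k)), s^{k+1} = s^k − ṡ^k sin(α_k) + s̈^k (1 − cos(α_k)), where A ẋ^k = A x^k − b, Aᵀ λ̇^k + ṡ^k = Aᵀ λ^k + s^k − c, A ẍ^k = 0, and Aᵀ λ̈^k + s̈^k = 0. Then, with ν_k = ∏_{j=0}^{k−1} (1 − sin(α_j)) (and ν_0 = 1), for every k ≥ 0: A x^k − b = ν_k (A x^0 − b) and Aᵀ λ^k + s^k − c = ν_k (Aᵀ λ^0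 + s^0 − c). -/
open Matrix

/-- Lemma 3.3: along the arc-search iterations, the primal and dual residuals
are reduced by the factor `ν_k = ∏_{j<k} (1 − sin(α_j))`. -/
theorem residual_reduction {m n : ℕ} (A : Matrix (Fin m) (Fin n) ℝ)
    (b : Fin m → ℝ) (c : Fin n → ℝ)
    (x xd xdd s sd sdd : ℕ → Fin n → ℝ)
    (lam ld ldd : ℕ → Fin m → ℝ) (α : ℕ → ℝ)
    (hxu : ∀ k, x (k + 1) =
      x k - Real.sin (α k) • xd k + (1 - Real.cos (α k)) • xdd k)
    (hlu : ∀ k, lam (k + 1) =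
      lam k - Real.sin (α k) • ld k + (1 - Real.cos (α k)) • ldd k)
    (hsu : ∀ k, s (k + 1) =
      s k - Real.sin (α k) • sd k + (1 - Real.cos (α k)) • sdd k)
    (hd1 : ∀ k, A.mulVec (xd k) = A.mulVec (x k) - b)
    (hd2 : ∀ k, Aᵀ.mulVec (ld k) + sd k = Aᵀ.mulVec (lam k) + s k - c)
    (hd3 : ∀ k, A.mulVec (xdd k) = 0)
    (hd4 : ∀ k, Aᵀ.mulVec (ldd k) + sdd k = 0) :
    ∀ k : ℕ,
      A.mulVec (x k) - b =
        (∏ j ∈ Finset.range k, (1 - Real.sin (α j))) • (A.mulVec (x 0) - b) ∧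
      Aᵀ.mulVec (lam k) + s k - c =
        (∏ j ∈ Finset.range k, (1 - Real.sin (α j))) •
          (Aᵀ.mulVec (lam 0) + s 0 - c) := by
  intro k
  induction k with
  | zero => simp
  | succ k ih =>
    obtain ⟨ih1, ih2⟩ := ih
    rw [Finset.prod_range_succ]
    constructor
    · have : A.mulVec (x (k + 1)) - b =
        (1 - Real.sin (α k)) • (A.mulVec (x k) - b) := by
        rw [hxu k]
        simp only [mulVec_add, mulVec_sub, mulVec_smul, hd1 k, hd3 k, smul_zero]
        ext i
        simp [sub_smul]
        ring
      rw [this, ih1, smul_smul, mul_comm]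
    · have : Aᵀ.mulVec (lam (k + 1)) + s (k + 1) - c =
        (1 - Real.sin (α k)) • (Aᵀ.mulVec (lam k) + s k - c) := by
        rw [hlu k, hsu k]
        simp only [mulVec_add, mulVec_sub, mulVec_smul]
        have h2 := hd2 k
        have h4 := hd4 k
        ext i
        have h2i := congrFun h2 i
        have h4i := congrFun h4 i
        simp only [Pi.add_apply, Pi.sub_apply, Pi.smul_apply, Pi.zero_apply, smul_eq_mul] at *
        linear_combination (-Real.sin (α k)) * h2i + (1 - Real.cos (α k)) * h4i
      rw [this, ih2, smul_smul, mul_comm]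
end

section
/- Let x, s, ẋ, ṡ, ẍ, s̈ ∈ ℝⁿ, σ, α ∈ ℝ, and μ = xᵀs/n. Assume s ∘ ẋ + x ∘ ṡ = x ∘ s, s ∘ ẍ + x ∘ s̈ = −2 ẋ ∘ ṡ + σ μ e, and ẍᵀs̈ = 0. Define x(α) = x − ẋ sin(α) + ẍ (1 − cos(α)) and s(α) = s − ṡ sin(α) + s̈ (1 − cos(α)). Then x(α)ᵀ s(α) = n μ (1 − sin(α)) + n σ μ (1 − cos(α)) − (ẋᵀṡ)(1 − cos(α))² − (ẋᵀs̈ + ṡᵀẍ) sin(α)(1 − cos(α)). -/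
open Matrix

/-- Lemma 3.4: exact expansion of the updated duality measure
`x(α)ᵀ s(α)` along the search ellipse. -/
theorem duality_measure_expansion {n : ℕ} (hn : 0 < n)
    (x s xd sd xdd sdd : Fin n → ℝ) (σ α μ : ℝ)
    (hμ : μ = x ⬝ᵥ s / n)
    (h1 : ∀ i, s i * xd i + x i * sd i = x i * s i)
    (h2 : ∀ i, s i * xdd i + x i * sdd i = -2 * (xd i * sd i) + σ * μ)
    (h3 : xdd ⬝ᵥ sdd = 0) :
    (x - Real.sin α • xd + (1 - Real.cos α) • xdd) ⬝ᵥ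
        (s - Real.sin α • sd + (1 - Real.cos α) • sdd) =
      n * μ * (1 - Real.sin α) + n * σ * μ * (1 - Real.cos α)
        - (xd ⬝ᵥ sd) * (1 - Real.cos α) ^ 2
        - (xd ⬝ᵥ sdd + sd ⬝ᵥ xdd) * Real.sin α * (1 - Real.cos α) := by
  have hn' : (n : ℝ) ≠ 0 := Nat.cast_ne_zero.mpr hn.ne'
  have hA : x ⬝ᵥ s = n * μ := by rw [hμ]; field_simp
  have hB : x ⬝ᵥ sd + xd ⬝ᵥ s = n * μ := by
    rw [← hA]
    simp only [dotProduct, ← Finset.sum_add_distrib]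
    refine Finset.sum_congr rfl fun i _ => ?_
    have := h1 i; linarith
  have hC : s ⬝ᵥ xdd + x ⬝ᵥ sdd = -2 * (xd ⬝ᵥ sd) + n * (σ * μ) := by
    simp only [dotProduct, ← Finset.sum_add_distrib]
    have : ∑ i, (s i * xdd i + x i * sdd i) = ∑ i, (-2 * (xd i * sd i) + σ * μ) :=
      Finset.sum_congr rfl fun i _ => h2 i
    rw [this]
    simp [Finset.sum_add_distrib, Finset.mul_sum, mul_comm]
  have hc1 : xdd ⬝ᵥ s = s ⬝ᵥ xdd := dotProduct_comm _ _
  have hc2 : xdd ⬝ᵥ sd = sd ⬝ᵥ xdd := dotProduct_comm _ _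
  have pyth : Real.sin α ^ 2 + Real.cos α ^ 2 = 1 := Real.sin_sq_add_cos_sq α
  simp only [sub_dotProduct, add_dotProduct, dotProduct_sub, dotProduct_add,
    smul_dotProduct, dotProduct_smul, smul_eq_mul]
  linear_combination hA + (-Real.sin α) * hB + (1 - Real.cos α) * hC +
    (xd ⬝ᵥ sd) * pyth + (1 - Real.cos α) * hc1 +
    (Real.sin α * (Real.cos α - 1)) * hc2 + (1 - Real.cos α)^2 * h3
end

section
/- Let x_i, s_i, ẋ_i, ṡ_i, ẍ_i, s̈_i, σ, μ, α be real numbers satisfying the componentwise Newton relations s_i ẋ_i + x_i ṡ_i = x_i s_i and s_i ẍ_i + x_i s̈_i = −2 ẋ_i ṡ_i + σ μ. Define x_i(α) = x_i − ẋ_i sin(α) + ẍ_i (1 − cos(α)) and s_i(α) = s_i − ṡ_i sin(α) + s̈_i (1 − cos(α)). Then x_i(α) s_i(α) = x_i s_i (1 − sin(α)) − ẋ_i ṡ_i (1 − cos(α))² + σ μ (1 − cos(α)) − (ẍ_i ṡ_i + ẋ_i s̈_i) sin(α)(1 − cos(α)) + ẍ_i s̈_i (1 − cos(α))². -/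
/-- Componentwise expansion of `x_i(α) s_i(α)` along the search ellipse
(used in Proposition 3.3 and Lemma 4.9). -/
theorem componentwise_product_expansion
    (xi si xdi sdi xddi sddi σ μ α : ℝ)
    (h1 : si * xdi + xi * sdi = xi * si)
    (h2 : si * xddi + xi * sddi = -2 * (xdi * sdi) + σ * μ) :
    (xi - xdi * Real.sin α + xddi * (1 - Real.cos α)) *
        (si - sdi * Real.sin α + sddi * (1 - Real.cos α)) =
      xi * si * (1 - Real.sin α)
        - xdi * sdi * (1 - Real.cos α) ^ 2
        + σ * μ * (1 - Real.cos α)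
        - (xddi * sdi + xdi * sddi) * Real.sin α * (1 - Real.cos α)
        + xddi * sddi * (1 - Real.cos α) ^ 2 := by
  linear_combination (-(Real.sin α)) * h1 + (1 - Real.cos α) * h2 + (xdi * sdi) * (Real.sin_sq_add_cos_sq α)
end

section
/- Let ρ ∈ (0,1), α ∈ (0, π/2] with ρ ≥ 1 − sin(α), and ν > 0; set ν' = ν (1 − sin(α)) and assume ν' > 0. Let x, s, x', s' ∈ ℝⁿ have all components positive and suppose min_i x'_i ≥ min{ρ · min_i x_i, ν} and min_i s'_i ≥ min{ρ · min_i s_i, ν}. Then min{ min_i x'_i, min_i s'_i } / ν' ≥ min{ min{ min_i x_i, min_i s_i } / ν, 1 }. -/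
/-- Inductive step of Lemma 4.1: the quantity
`β_k = min{min_i x_i, min_i s_i}/ν_k` satisfies `β_{k+1} ≥ min{β_k, 1}`. -/
theorem beta_inductive_step {n : ℕ} (hn : 0 < n) (ρ α ν ν' : ℝ)
    (hρ : ρ ∈ Set.Ioo (0 : ℝ) 1) (hα : α ∈ Set.Ioc (0 : ℝ) (Real.pi / 2))
    (hρα : ρ ≥ 1 - Real.sin α) (hν : 0 < ν)
    (hν'def : ν' = ν * (1 - Real.sin α)) (hν' : 0 < ν')
    (x s x' s' : Fin n → ℝ)
    (hx : ∀ i, 0 < x i) (hs : ∀ i, 0 < s i)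
    (hx' : ∀ i, 0 < x' i) (hs' : ∀ i, 0 < s' i)
    (hxmin : (⨅ i, x' i) ≥ min (ρ * ⨅ i, x i) ν)
    (hsmin : (⨅ i, s' i) ≥ min (ρ * ⨅ i, s i) ν) :
    min (⨅ i, x' i) (⨅ i, s' i) / ν' ≥
      min (min (⨅ i, x i) (⨅ i, s i) / ν) 1 := by
  haveI : Nonempty (Fin n) := Fin.pos_iff_nonempty.mp hn
  obtain ⟨hρ0, hρ1⟩ := hρ
  obtain ⟨hα0, hα2⟩ := hα
  have ht : 0 < 1 - Real.sin α := by
    rw [hν'def] at hν'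
    nlinarith
  have hsin0 : 0 < Real.sin α :=
    Real.sin_pos_of_pos_of_lt_pi hα0 (lt_of_le_of_lt hα2 (by linarith [Real.pi_pos]))
  set a := ⨅ i, x i with ha
  set b := ⨅ i, s i with hb
  set a' := ⨅ i, x' i with ha'
  set b' := ⨅ i, s' i with hb'
  have ha0 : 0 ≤ a := le_ciInf fun i => (hx i).le
  have hb0 : 0 ≤ b := le_ciInf fun i => (hs i).le
  set m := min (min a b / ν) 1 with hm
  have hm0 : 0 ≤ m := le_min (by positivity) zero_le_one
  have hm1 : m ≤ 1 := min_le_right _ _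
  have hma : m * ν ≤ a := by
    have : m ≤ a / ν := le_trans (min_le_left _ _)
      (div_le_div_of_nonneg_right (min_le_left a b) hν.le)
    exact (le_div_iff₀ hν).mp this
  have hmb : m * ν ≤ b := by
    have : m ≤ b / ν := le_trans (min_le_left _ _)
      (div_le_div_of_nonneg_right (min_le_right a b) hν.le)
    exact (le_div_iff₀ hν).mp this
  subst hν'def
  rw [ge_iff_le, le_div_iff₀ (by positivity)]
  refine le_min ?_ ?_
  · refine le_trans (le_min ?_ ?_) hxmin
    · nlinarith
    · nlinarith
  · refine le_trans (le_min ?_ ?_) hsmin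
    · nlinarith
    · nlinarith
end

section
/- Let A be a real m×n matrix, let x, s ∈ ℝⁿ have all components positive, and let D be the n×n diagonal matrix with entries D_ii = √(x_i/s_i). Suppose δx, δs ∈ ℝⁿ and δλ ∈ ℝᵐ satisfy A δx = 0, Aᵀ δλ + δs = 0, and s ∘ δx + x ∘ δs = r for some r ∈ ℝⁿ. Then ‖D⁻¹ δx‖ ≤ ‖w‖ and ‖D δs‖ ≤ ‖w‖, where w ∈ ℝⁿ is the vector with components w_i = r_i / √(x_i s_i). In particular: (a) if r = x ∘ s then ‖D⁻¹ δx‖, ‖D δs‖ ≤ √(n μ) with μ = xᵀs/n; (b) if r = −ν · s ∘ u for ν ≥ 0 and u ∈ ℝⁿ, then ‖D⁻¹ δx‖, ‖D δs‖ ≤ ν ‖D⁻¹ u‖; (c) if r = −ν · x ∘ v for ν ≥ 0 and v ∈ ℝⁿ, then ‖D⁻¹ δx‖, ‖D δs‖ ≤ ν ‖D v‖. -/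
open Matrix

/-- The Euclidean norm of a vector in `ℝⁿ`. -/
noncomputable def euclNorm {n : ℕ} (v : Fin n → ℝ) : ℝ :=
  Real.sqrt (∑ i, v i ^ 2)

/-- `D⁻¹ v`, where `D = diag(√(x_i/s_i))`. -/
noncomputable def dInvApp {n : ℕ} (x s v : Fin n → ℝ) : Fin n → ℝ :=
  fun i => Real.sqrt (s i / x i) * v i

/-- `D v`, where `D = diag(√(x_i/s_i))`. -/
noncomputable def dApp {n : ℕ} (x s v : Fin n → ℝ) : Fin n → ℝ :=
  fun i => Real.sqrt (x i / s i) * v i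

/-!
Since `A δx = 0` and `δs = -Aᵀ δλ`, the vectors `δx` and `δs` are orthogonal, and so are their
rescalings `D⁻¹ δx` and `D δs`, because the two scalings cancel in each coordinate. Dividing the
third equation by `√(x_i s_i)` gives `D⁻¹ δx + D δs = w`, so by Pythagoras each summand has norm
at most `‖w‖`. The special cases only evaluate `‖w‖`.
-/

theorem Real.sqrt_div_eq_div_sqrt_mul {a : ℝ} (ha : 0 ≤ a) (b : ℝ) :
    √(b / a) = b / √(a * b) := by
  rw [Real.sqrt_mul ha, div_mul_eq_div_div_swap, Real.div_sqrt, Real.sqrt_div' b ha]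

theorem Matrix.dotProduct_transpose_mulVec_eq_zero {m n R : Type*} [Fintype m] [Fintype n]
    [CommSemiring R] {A : Matrix m n R} {v : n → R} (hv : A *ᵥ v = 0) (y : m → R) :
    v ⬝ᵥ (Aᵀ *ᵥ y) = 0 := by
  rw [dotProduct_mulVec, vecMul_transpose, hv, zero_dotProduct]

theorem Matrix.natCast_mul_dotProduct_div {n : ℕ} (x y : Fin n → ℝ) :
    (n : ℝ) * (x ⬝ᵥ y / n) = x ⬝ᵥ y := by
  rcases n with _ | n
  · simp
  · field_simp

section euclNorm

variable {n : ℕ}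

theorem euclNorm_nonneg (v : Fin n → ℝ) : 0 ≤ euclNorm v :=
  Real.sqrt_nonneg _

theorem euclNorm_sq (v : Fin n → ℝ) : euclNorm v ^ 2 = v ⬝ᵥ v := by
  rw [euclNorm, Real.sq_sqrt (by positivity), dotProduct]
  simp_rw [sq]

theorem euclNorm_smul (c : ℝ) (v : Fin n → ℝ) : euclNorm (c • v) = |c| * euclNorm v := by
  simp only [euclNorm, Pi.smul_apply, smul_eq_mul, mul_pow, ← Finset.mul_sum]
  rw [Real.sqrt_mul (sq_nonneg c), Real.sqrt_sq_eq_abs]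

theorem euclNorm_sqrt {v : Fin n → ℝ} (hv : ∀ i, 0 ≤ v i) :
    euclNorm (fun i => √(v i)) = √(∑ i, v i) := by
  simp only [euclNorm, Real.sq_sqrt (hv _)]

theorem euclNorm_add_sq_of_dotProduct_eq_zero {p q : Fin n → ℝ} (h : p ⬝ᵥ q = 0) :
    euclNorm (p + q) ^ 2 = euclNorm p ^ 2 + euclNorm q ^ 2 := by
  simp only [euclNorm_sq, add_dotProduct, dotProduct_add, dotProduct_comm q p, h]
  ring

theorem euclNorm_le_of_dotProduct_eq_zero {p q : Fin n → ℝ} (h : p ⬝ᵥ q = 0) :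
    euclNorm p ≤ euclNorm (p + q) ∧ euclNorm q ≤ euclNorm (p + q) := by
  have hpyth := euclNorm_add_sq_of_dotProduct_eq_zero h
  constructor <;>
    refine (pow_le_pow_iff_left₀ (euclNorm_nonneg _) (euclNorm_nonneg _) two_ne_zero).1 ?_ <;>
    nlinarith [sq_nonneg (euclNorm p), sq_nonneg (euclNorm q)]

end euclNorm

section scaling

variable {n : ℕ} {x s : Fin n → ℝ}

theorem dInvApp_apply (hx : ∀ i, 0 ≤ x i) (v : Fin n → ℝ) (i : Fin n) :
    dInvApp x s v i = s i * v i / √(x i * s i) := by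
  rw [dInvApp, Real.sqrt_div_eq_div_sqrt_mul (hx i)]
  ring

theorem dApp_apply (hs : ∀ i, 0 ≤ s i) (v : Fin n → ℝ) (i : Fin n) :
    dApp x s v i = x i * v i / √(x i * s i) := by
  rw [dApp, Real.sqrt_div_eq_div_sqrt_mul (hs i), mul_comm (s i)]
  ring

theorem dInvApp_add_dApp (hx : ∀ i, 0 ≤ x i) (hs : ∀ i, 0 ≤ s i) (p q : Fin n → ℝ) :
    dInvApp x s p + dApp x s q = fun i => (s i * p i + x i * q i) / √(x i * s i) := by
  ext i
  rw [Pi.add_apply, dInvApp_apply hx, dApp_apply hs, add_div]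

theorem dInvApp_dotProduct_dApp (hx : ∀ i, 0 < x i) (hs : ∀ i, 0 < s i) (p q : Fin n → ℝ) :
    dInvApp x s p ⬝ᵥ dApp x s q = p ⬝ᵥ q := by
  refine Finset.sum_congr rfl fun i _ => ?_
  have hscale : √(s i / x i) * √(x i / s i) = 1 := by
    rw [← Real.sqrt_mul (div_nonneg (hs i).le (hx i).le),
      div_mul_div_comm, mul_comm (s i),
      div_self (mul_pos (hx i) (hs i)).ne', Real.sqrt_one]
  rw [dInvApp, dApp, mul_mul_mul_comm, hscale, one_mul]

end scaling

/-- The bounds (4.10a)–(4.10c): for a solution `(δx, δλ, δs)` of the Newton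
system with right-hand side `r`, both `‖D⁻¹δx‖` and `‖Dδs‖` are bounded by
`‖(XS)^{-1/2} r‖`, with the three special cases `r = x∘s`, `r = −ν s∘u`,
`r = −ν x∘v`. -/
theorem newton_solution_norm_bounds {m n : ℕ}
    (A : Matrix (Fin m) (Fin n) ℝ)
    (x s : Fin n → ℝ) (hx : ∀ i, 0 < x i) (hs : ∀ i, 0 < s i)
    (dx ds r : Fin n → ℝ) (dl : Fin m → ℝ)
    (h1 : A.mulVec dx = 0) (h2 : Aᵀ.mulVec dl + ds = 0)
    (h3 : ∀ i, s i * dx i + x i * ds i = r i) :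
    euclNorm (dInvApp x s dx) ≤ euclNorm (fun i => r i / Real.sqrt (x i * s i)) ∧
    euclNorm (dApp x s ds) ≤ euclNorm (fun i => r i / Real.sqrt (x i * s i)) ∧
    ((∀ i, r i = x i * s i) →
      euclNorm (dInvApp x s dx) ≤ Real.sqrt (n * (x ⬝ᵥ s / n)) ∧
      euclNorm (dApp x s ds) ≤ Real.sqrt (n * (x ⬝ᵥ s / n))) ∧
    (∀ (ν : ℝ), 0 ≤ ν → ∀ u : Fin n → ℝ, (∀ i, r i = -(ν * (s i * u i))) →
      euclNorm (dInvApp x s dx) ≤ ν * euclNorm (dInvApp x s u) ∧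
      euclNorm (dApp x s ds) ≤ ν * euclNorm (dInvApp x s u)) ∧
    (∀ (ν : ℝ), 0 ≤ ν → ∀ v : Fin n → ℝ, (∀ i, r i = -(ν * (x i * v i))) →
      euclNorm (dInvApp x s dx) ≤ ν * euclNorm (dApp x s v) ∧
      euclNorm (dApp x s ds) ≤ ν * euclNorm (dApp x s v)) := by
  have hx0 : ∀ i, 0 ≤ x i := fun i => (hx i).le
  have hs0 : ∀ i, 0 ≤ s i := fun i => (hs i).le
  have horth : dInvApp x s dx ⬝ᵥ dApp x s ds = 0 := by
    rw [dInvApp_dotProduct_dApp hx hs, eq_neg_of_add_eq_zero_right h2, dotProduct_neg,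
      dotProduct_transpose_mulVec_eq_zero h1, neg_zero]
  have hsplit := dInvApp_add_dApp hx0 hs0 dx ds
  simp only [h3] at hsplit
  obtain ⟨hdx, hds⟩ := hsplit ▸ euclNorm_le_of_dotProduct_eq_zero horth
  refine ⟨hdx, hds, fun hr => ?_, fun ν hν u hr => ?_, fun ν hν v hr => ?_⟩
  · have hw : euclNorm (fun i => r i / √(x i * s i)) = √(n * (x ⬝ᵥ s / n)) := by
      simp only [hr, Real.div_sqrt, euclNorm_sqrt fun i => mul_nonneg (hx0 i) (hs0 i),
        natCast_mul_dotProduct_div]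
      rfl
    exact ⟨hw ▸ hdx, hw ▸ hds⟩
  · have hw : (fun i => r i / √(x i * s i)) = (-ν) • dInvApp x s u := by
      ext i
      rw [hr, Pi.smul_apply, dInvApp_apply hx0, smul_eq_mul]
      ring
    rw [hw, euclNorm_smul, abs_neg, abs_of_nonneg hν] at hdx hds
    exact ⟨hdx, hds⟩
  · have hw : (fun i => r i / √(x i * s i)) = (-ν) • dApp x s v := by
      ext i
      rw [hr, Pi.smul_apply, dApp_apply hs0, smul_eq_mul]
      ring
    rw [hw, euclNorm_smul, abs_neg, abs_of_nonneg hν] at hdx hds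
    exact ⟨hdx, hds⟩
end

section
/- Let x, s ∈ ℝⁿ have all components positive, μ = xᵀs/n > 0, θ ∈ (0, 1], and suppose x_i s_i ≥ θ μ for every i; let D be the diagonal matrix with D_ii = √(x_i/s_i). (a) If p_x, p_s ∈ ℝⁿ satisfy p_xᵀ p_s = 0 and s ∘ p_x + x ∘ p_s = μ e, then ‖D⁻¹ p_x‖ ≤ √(n/θ) · √μ and ‖D p_s‖ ≤ √(n/θ) · √μ. (b) If in addition ẋ, ṡ, q_x, q_s ∈ ℝⁿ satisfy ‖D⁻¹ ẋ‖ ≤ C₂ √(n μ), ‖D ṡ‖ ≤ C₂ √(n μ) for some C₂ > 0, q_xᵀ q_s = 0, and s ∘ q_x + x ∘ q_s = −2 ẋ ∘ ṡ, then ‖D⁻¹ q_x‖ ≤ (2 C₂² / √θ) · n √μ and ‖D q_s‖ ≤ (2 C₂² / √θ) · n √μ. -/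
open Matrix

private lemma sqrt_div_eq' {a b : ℝ} (ha : 0 < a) (hb : 0 < b) :
    Real.sqrt (b / a) = b / Real.sqrt (a * b) := by
  rw [eq_div_iff (Real.sqrt_ne_zero'.mpr (mul_pos ha hb) : Real.sqrt (a * b) ≠ 0),
    ← Real.sqrt_mul (div_nonneg hb.le ha.le),
    show b / a * (a * b) = b ^ 2 by field_simp]
  exact Real.sqrt_sq hb.le

private lemma orth_bound {n : ℕ} (u v : Fin n → ℝ) (h0 : ∑ i, u i * v i = 0)
    {B : ℝ} (hB : 0 ≤ B) (hsum : ∑ i, (u i + v i) ^ 2 ≤ B ^ 2) :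
    euclNorm u ≤ B ∧ euclNorm v ≤ B := by
  have hexp : ∑ i, (u i + v i) ^ 2 = ∑ i, u i ^ 2 + ∑ i, v i ^ 2 := by
    have h : ∀ i ∈ Finset.univ, (u i + v i) ^ 2 = u i ^ 2 + v i ^ 2 + 2 * (u i * v i) :=
      fun i _ => by ring
    rw [Finset.sum_congr rfl h, Finset.sum_add_distrib, Finset.sum_add_distrib,
      ← Finset.mul_sum, h0]
    ring
  have hvn : 0 ≤ ∑ i, v i ^ 2 := Finset.sum_nonneg fun i _ => sq_nonneg _
  have hun : 0 ≤ ∑ i, u i ^ 2 := Finset.sum_nonneg fun i _ => sq_nonneg _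
  have hu : ∑ i, u i ^ 2 ≤ B ^ 2 := by linarith
  have hv : ∑ i, v i ^ 2 ≤ B ^ 2 := by linarith
  constructor
  · calc euclNorm u ≤ Real.sqrt (B ^ 2) := Real.sqrt_le_sqrt hu
      _ = B := Real.sqrt_sq hB
  · calc euclNorm v ≤ Real.sqrt (B ^ 2) := Real.sqrt_le_sqrt hv
      _ = B := Real.sqrt_sq hB

/-- Lemma 4.5: bounds for the components `(p_x, p_s)` and `(q_x, q_s)` of the
second derivative of the search arc inside the neighborhood `x_i s_i ≥ θμ`. -/
theorem second_derivative_component_bounds {n : ℕ}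
    (x s : Fin n → ℝ) (hx : ∀ i, 0 < x i) (hs : ∀ i, 0 < s i)
    (μ θ : ℝ) (hμ : μ = x ⬝ᵥ s / n) (hμpos : 0 < μ)
    (hθ : 0 < θ) (hθ1 : θ ≤ 1)
    (hxs : ∀ i, θ * μ ≤ x i * s i) :
    (∀ px ps : Fin n → ℝ, px ⬝ᵥ ps = 0 →
      (∀ i, s i * px i + x i * ps i = μ) →
      euclNorm (dInvApp x s px) ≤ Real.sqrt (n / θ) * Real.sqrt μ ∧
      euclNorm (dApp x s ps) ≤ Real.sqrt (n / θ) * Real.sqrt μ) ∧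
    (∀ (C2 : ℝ), 0 < C2 → ∀ xd sd qx qs : Fin n → ℝ,
      euclNorm (dInvApp x s xd) ≤ C2 * Real.sqrt (n * μ) →
      euclNorm (dApp x s sd) ≤ C2 * Real.sqrt (n * μ) →
      qx ⬝ᵥ qs = 0 →
      (∀ i, s i * qx i + x i * qs i = -2 * (xd i * sd i)) →
      euclNorm (dInvApp x s qx) ≤ 2 * C2 ^ 2 / Real.sqrt θ * n * Real.sqrt μ ∧
      euclNorm (dApp x s qs) ≤ 2 * C2 ^ 2 / Real.sqrt θ * n * Real.sqrt μ) := by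
  have key1 : ∀ w z : Fin n → ℝ, ∀ i, dInvApp x s w i * dApp x s z i = w i * z i := by
    intro w z i
    have h1 : Real.sqrt (s i / x i) * Real.sqrt (x i / s i) = 1 := by
      rw [← Real.sqrt_mul (div_nonneg (hs i).le (hx i).le),
        show s i / x i * (x i / s i) = 1 by
          rw [div_mul_div_comm, mul_comm (s i)]
          exact div_self (mul_pos (hx i) (hs i)).ne']
      exact Real.sqrt_one
    show Real.sqrt (s i / x i) * w i * (Real.sqrt (x i / s i) * z i) = w i * z i
    calc Real.sqrt (s i / x i) * w i * (Real.sqrt (x i / s i) * z i)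
        = Real.sqrt (s i / x i) * Real.sqrt (x i / s i) * (w i * z i) := by ring
      _ = w i * z i := by rw [h1, one_mul]
  have key2 : ∀ w z : Fin n → ℝ, ∀ i,
      dInvApp x s w i + dApp x s z i = (s i * w i + x i * z i) / Real.sqrt (x i * s i) := by
    intro w z i
    show Real.sqrt (s i / x i) * w i + Real.sqrt (x i / s i) * z i = _
    rw [sqrt_div_eq' (hx i) (hs i), sqrt_div_eq' (hs i) (hx i), mul_comm (s i) (x i)]
    ring
  have hxspos : ∀ i, (0:ℝ) < x i * s i := fun i => mul_pos (hx i) (hs i)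
  constructor
  · -- part (a)
    intro px ps hdot hsum
    have h0 : ∑ i, dInvApp x s px i * dApp x s ps i = 0 := by
      simp_rw [key1]
      simpa [dotProduct] using hdot
    have hterm : ∀ i, (dInvApp x s px i + dApp x s ps i) ^ 2 ≤ μ / θ := by
      intro i
      rw [key2, hsum i, div_pow, Real.sq_sqrt (hxspos i).le]
      rw [div_le_div_iff₀ (hxspos i) hθ]
      nlinarith [hxs i, hμpos.le]
    have hB : 0 ≤ Real.sqrt ((n:ℝ) / θ) * Real.sqrt μ := by positivity
    refine orth_bound _ _ h0 hB ?_
    calc ∑ i, (dInvApp x s px i + dApp x s ps i) ^ 2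
        ≤ ∑ _i : Fin n, μ / θ := Finset.sum_le_sum fun i _ => hterm i
      _ = n * (μ / θ) := by simp [Finset.sum_const, Finset.card_univ, mul_comm]
      _ = (Real.sqrt ((n:ℝ) / θ) * Real.sqrt μ) ^ 2 := by
          rw [mul_pow, Real.sq_sqrt (div_nonneg (Nat.cast_nonneg n) hθ.le),
            Real.sq_sqrt hμpos.le]
          ring
  · -- part (b)
    intro C2 hC2 xd sd qx qs hxd hsd hdot hsum
    set A := dInvApp x s xd with hA
    set Bv := dApp x s sd with hBv
    have hA2 : ∑ i, A i ^ 2 ≤ C2 ^ 2 * ((n:ℝ) * μ) := by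
      have h1 : ∑ i, A i ^ 2 = Real.sqrt (∑ i, A i ^ 2) ^ 2 :=
        (Real.sq_sqrt (Finset.sum_nonneg fun i _ => sq_nonneg _)).symm
      rw [h1]
      calc Real.sqrt (∑ i, A i ^ 2) ^ 2 ≤ (C2 * Real.sqrt ((n:ℝ) * μ)) ^ 2 :=
            pow_le_pow_left₀ (Real.sqrt_nonneg _) hxd 2
        _ = C2 ^ 2 * ((n:ℝ) * μ) := by
            rw [mul_pow, Real.sq_sqrt (mul_nonneg (Nat.cast_nonneg n) hμpos.le)]
    have hB2 : ∑ i, Bv i ^ 2 ≤ C2 ^ 2 * ((n:ℝ) * μ) := by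
      have h1 : ∑ i, Bv i ^ 2 = Real.sqrt (∑ i, Bv i ^ 2) ^ 2 :=
        (Real.sq_sqrt (Finset.sum_nonneg fun i _ => sq_nonneg _)).symm
      rw [h1]
      calc Real.sqrt (∑ i, Bv i ^ 2) ^ 2 ≤ (C2 * Real.sqrt ((n:ℝ) * μ)) ^ 2 :=
            pow_le_pow_left₀ (Real.sqrt_nonneg _) hsd 2
        _ = C2 ^ 2 * ((n:ℝ) * μ) := by
            rw [mul_pow, Real.sq_sqrt (mul_nonneg (Nat.cast_nonneg n) hμpos.le)]
    have h0 : ∑ i, dInvApp x s qx i * dApp x s qs i = 0 := by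
      simp_rw [key1]
      simpa [dotProduct] using hdot
    have hterm : ∀ i, (dInvApp x s qx i + dApp x s qs i) ^ 2
        ≤ 4 / (θ * μ) * (A i ^ 2 * Bv i ^ 2) := by
      intro i
      have hab : xd i * sd i = A i * Bv i := (key1 xd sd i).symm
      rw [key2, hsum i, hab, div_pow, Real.sq_sqrt (hxspos i).le,
        show (-2 * (A i * Bv i)) ^ 2 = 4 * (A i ^ 2 * Bv i ^ 2) by ring,
        show 4 / (θ * μ) * (A i ^ 2 * Bv i ^ 2) = 4 * (A i ^ 2 * Bv i ^ 2) / (θ * μ) by ring]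
      exact div_le_div_of_nonneg_left (by positivity) (mul_pos hθ hμpos) (hxs i)
    have hprodsum : ∑ i, A i ^ 2 * Bv i ^ 2 ≤ (∑ i, A i ^ 2) * (∑ j, Bv j ^ 2) := by
      calc ∑ i, A i ^ 2 * Bv i ^ 2
          ≤ ∑ i, A i ^ 2 * (∑ j, Bv j ^ 2) :=
            Finset.sum_le_sum fun i _ => mul_le_mul_of_nonneg_left
              (Finset.single_le_sum (f := fun j => Bv j ^ 2) (fun j _ => sq_nonneg _)
                (Finset.mem_univ i)) (sq_nonneg _)
        _ = (∑ i, A i ^ 2) * (∑ j, Bv j ^ 2) := by rw [← Finset.sum_mul]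
    refine orth_bound _ _ h0 (by positivity) ?_
    have hBv2nonneg : 0 ≤ ∑ i, Bv i ^ 2 := Finset.sum_nonneg fun i _ => sq_nonneg _
    calc ∑ i, (dInvApp x s qx i + dApp x s qs i) ^ 2
        ≤ ∑ i, 4 / (θ * μ) * (A i ^ 2 * Bv i ^ 2) := Finset.sum_le_sum fun i _ => hterm i
      _ = 4 / (θ * μ) * ∑ i, A i ^ 2 * Bv i ^ 2 := by rw [Finset.mul_sum]
      _ ≤ 4 / (θ * μ) * ((∑ i, A i ^ 2) * (∑ j, Bv j ^ 2)) :=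
          mul_le_mul_of_nonneg_left hprodsum
            (div_nonneg (by norm_num) (mul_pos hθ hμpos).le)
      _ ≤ 4 / (θ * μ) * ((C2 ^ 2 * ((n:ℝ) * μ)) * (C2 ^ 2 * ((n:ℝ) * μ))) := by
          refine mul_le_mul_of_nonneg_left ?_
            (div_nonneg (by norm_num) (mul_pos hθ hμpos).le)
          exact mul_le_mul hA2 hB2 hBv2nonneg
            (mul_nonneg (sq_nonneg C2) (mul_nonneg (Nat.cast_nonneg n) hμpos.le))
      _ = (2 * C2 ^ 2 / Real.sqrt θ * n * Real.sqrt μ) ^ 2 := by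
          have hsθ : Real.sqrt θ ^ 2 = θ := Real.sq_sqrt hθ.le
          have hsμ : Real.sqrt μ ^ 2 = μ := Real.sq_sqrt hμpos.le
          have hne : Real.sqrt θ ≠ 0 := Real.sqrt_ne_zero'.mpr hθ
          rw [show (2 * C2 ^ 2 / Real.sqrt θ * n * Real.sqrt μ) ^ 2
              = 4 * C2 ^ 4 * (n:ℝ) ^ 2 * Real.sqrt μ ^ 2 / Real.sqrt θ ^ 2 by ring,
            hsθ, hsμ]
          field_simp [hθ.ne', hμpos.ne']
end

section
/- Let θ ∈ (0, 1], ρ ∈ (0, 1), C₂, C₃ > 0, n ≥ 1, μ > 0, and let x, s ∈ ℝⁿ have all components positive with x_i s_i ≥ θ μ for every i. Suppose ẋ, ẍ ∈ ℝⁿ satisfy, for every i, |ẋ_i| · √(s_i/x_i) ≤ C₂ √(n μ) and |ẍ_i| · √(s_i/x_i) ≤ C₃ n √μ. Set C₄ = √θ (1 − ρ) / (2 max{C₂, √C₃}). Then for every α ∈ [0, π/2] with sin(α) ≤ C₄/√n, and for every i: x_i − ẋ_i sin(α) + ẍ_i (1 − cos(α)) ≥ ρ x_i; in particular the updated component x_i(α)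 = x_i − ẋ_i sin(α) + ẍ_i (1 − cos(α)) is strictly positive. -/
set_option maxHeartbeats 1600000 in
/-- Lemma 4.7: for step sizes with `sin(α) ≤ C₄/√n`, where
`C₄ = √θ(1 − ρ)/(2 max{C₂, √C₃})`, the updated components satisfy
`x_i(α) ≥ ρ x_i > 0`. -/
theorem positivity_of_iterates {n : ℕ} (hn : 1 ≤ n)
    (θ ρ C2 C3 μ : ℝ)
    (hθ : 0 < θ) (hθ1 : θ ≤ 1) (hρ : ρ ∈ Set.Ioo (0 : ℝ) 1)
    (hC2 : 0 < C2) (hC3 : 0 < C3) (hμ : 0 < μ)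
    (x s xd xdd : Fin n → ℝ)
    (hx : ∀ i, 0 < x i) (hs : ∀ i, 0 < s i)
    (hxs : ∀ i, θ * μ ≤ x i * s i)
    (hxd : ∀ i, |xd i| * Real.sqrt (s i / x i) ≤ C2 * Real.sqrt (n * μ))
    (hxdd : ∀ i, |xdd i| * Real.sqrt (s i / x i) ≤ C3 * n * Real.sqrt μ) :
    ∀ α : ℝ, 0 ≤ α → α ≤ Real.pi / 2 →
      Real.sin α ≤
        Real.sqrt θ * (1 - ρ) / (2 * max C2 (Real.sqrt C3)) / Real.sqrt n →
      ∀ i, ρ * x i ≤ x i - xd i * Real.sin α + xdd i * (1 - Real.cos α) ∧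
        0 < x i - xd i * Real.sin α + xdd i * (1 - Real.cos α) := by
  intro α hα0 hα2 hsin i
  obtain ⟨hρ0, hρ1⟩ := hρ
  set M := max C2 (Real.sqrt C3) with hM
  have hM0 : 0 < M := lt_of_lt_of_le hC2 (le_max_left _ _)
  have hC2M : C2 ≤ M := le_max_left _ _
  have hC3M : C3 ≤ M ^ 2 := by
    have h1 : Real.sqrt C3 ≤ M := le_max_right _ _
    nlinarith [Real.sq_sqrt hC3.le, Real.sqrt_nonneg C3]
  clear_value M
  have hn0 : (0:ℝ) < n := by positivity
  have hn1 : (1:ℝ) ≤ n := by exact_mod_cast hn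
  have hsn : 0 < Real.sqrt n := Real.sqrt_pos.2 hn0
  have hsn2 : (Real.sqrt n) ^ 2 = n := Real.sq_sqrt hn0.le
  have hsθ : 0 < Real.sqrt θ := Real.sqrt_pos.2 hθ
  have hsθ2 : (Real.sqrt θ) ^ 2 = θ := Real.sq_sqrt hθ.le
  have hsθ1 : Real.sqrt θ ≤ 1 := by
    rw [show (1:ℝ) = Real.sqrt 1 by simp]
    exact Real.sqrt_le_sqrt hθ1
  have hsμ : 0 < Real.sqrt μ := Real.sqrt_pos.2 hμ
  have hpi := Real.pi_pos
  have hsin0 : 0 ≤ Real.sin α :=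
    Real.sin_nonneg_of_nonneg_of_le_pi hα0 (by linarith)
  have hcos0 : 0 ≤ Real.cos α :=
    Real.cos_nonneg_of_mem_Icc ⟨by linarith, hα2⟩
  have hcos1 : Real.cos α ≤ 1 := Real.cos_le_one α
  have hsc : Real.sin α ^ 2 + Real.cos α ^ 2 = 1 := Real.sin_sq_add_cos_sq α
  -- rearranged sin bound
  have hsinM : 2 * M * Real.sqrt n * Real.sin α ≤ Real.sqrt θ * (1 - ρ) := by
    rw [div_div] at hsin
    have h := (le_div_iff₀ (by positivity)).1 hsin
    nlinarith
  -- 1 - cos α ≤ sin² α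
  have hcos_sin : 1 - Real.cos α ≤ Real.sin α ^ 2 := by nlinarith
  -- key scalar bounds
  have keyA : C2 * (Real.sqrt n * Real.sqrt μ) * Real.sin α
      ≤ (1 - ρ) / 2 * (Real.sqrt θ * Real.sqrt μ) := by
    have k1 := mul_le_mul_of_nonneg_right hC2M (mul_nonneg hsn.le hsin0)
    have k2 : C2 * Real.sqrt n * Real.sin α ≤ (1 - ρ) / 2 * Real.sqrt θ := by
      linarith [k1, hsinM]
    have k3 := mul_le_mul_of_nonneg_right k2 hsμ.le
    linarith [k3]
  have keyB : C3 * n * Real.sqrt μ * (1 - Real.cos α)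
      ≤ (1 - ρ) / 2 * (Real.sqrt θ * Real.sqrt μ) := by
    have hsq : 4 * M ^ 2 * (n : ℝ) * Real.sin α ^ 2 ≤ θ * (1 - ρ) ^ 2 := by
      have h := mul_self_le_mul_self
        (by positivity : (0:ℝ) ≤ 2 * M * Real.sqrt n * Real.sin α) hsinM
      have e1 : (2 * M * Real.sqrt n * Real.sin α) * (2 * M * Real.sqrt n * Real.sin α)
          = 4 * M ^ 2 * (Real.sqrt n ^ 2) * Real.sin α ^ 2 := by ring
      have e2 : (Real.sqrt θ * (1 - ρ)) * (Real.sqrt θ * (1 - ρ))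
          = (Real.sqrt θ ^ 2) * (1 - ρ) ^ 2 := by ring
      rw [e1, e2, hsn2, hsθ2] at h
      exact h
    have h1 : C3 * (n : ℝ) * (1 - Real.cos α) ≤ θ * (1 - ρ) ^ 2 / 4 := by
      have a1 := mul_le_mul_of_nonneg_left hcos_sin (mul_nonneg hC3.le hn0.le)
      have a2 := mul_le_mul_of_nonneg_right hC3M
        (mul_nonneg hn0.le (sq_nonneg (Real.sin α)))
      nlinarith [a1, a2, hsq]
    have h2 : θ * (1 - ρ) ^ 2 / 4 ≤ (1 - ρ) / 2 * Real.sqrt θ := by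
      have hθθ : θ ≤ Real.sqrt θ := by nlinarith [hsθ2, hsθ1, hsθ.le]
      have hr2 : (1 - ρ) ^ 2 ≤ (1 - ρ) := by nlinarith [hρ0, hρ1]
      nlinarith [mul_le_mul hθθ hr2 (sq_nonneg (1 - ρ)) hsθ.le]
    calc C3 * (n : ℝ) * Real.sqrt μ * (1 - Real.cos α)
        = C3 * (n : ℝ) * (1 - Real.cos α) * Real.sqrt μ := by ring
      _ ≤ θ * (1 - ρ) ^ 2 / 4 * Real.sqrt μ :=
          mul_le_mul_of_nonneg_right h1 hsμ.le
      _ ≤ (1 - ρ) / 2 * Real.sqrt θ * Real.sqrt μ :=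
          mul_le_mul_of_nonneg_right h2 hsμ.le
      _ = (1 - ρ) / 2 * (Real.sqrt θ * Real.sqrt μ) := by ring
  -- componentwise
  have hxi := hx i
  have hsi := hs i
  have ht : 0 < Real.sqrt (s i / x i) := Real.sqrt_pos.2 (by positivity)
  set t := Real.sqrt (s i / x i) with htdef
  have hxt : x i * t = Real.sqrt (x i * s i) := by
    have hxs2 : x i * s i = x i ^ 2 * (s i / x i) := by field_simp
    rw [htdef, hxs2, Real.sqrt_mul (sq_nonneg _), Real.sqrt_sq hxi.le]
  have hθμ' : Real.sqrt θ * Real.sqrt μ ≤ x i * t := by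
    rw [hxt, ← Real.sqrt_mul hθ.le]
    exact Real.sqrt_le_sqrt (hxs i)
  have hnμ : Real.sqrt ((n : ℝ) * μ) = Real.sqrt n * Real.sqrt μ :=
    Real.sqrt_mul hn0.le μ
  have hcosnn : 0 ≤ 1 - Real.cos α := by linarith
  have hρ2 : (0:ℝ) ≤ (1 - ρ) / 2 := by linarith
  have hA : |xd i| * Real.sin α ≤ (1 - ρ) / 2 * x i := by
    have h2 := mul_le_mul_of_nonneg_right (hxd i) hsin0
    rw [hnμ] at h2
    have h1 : |xd i| * Real.sin α * t ≤ (1 - ρ) / 2 * x i * t :=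
      calc |xd i| * Real.sin α * t = |xd i| * t * Real.sin α := by ring
        _ ≤ C2 * (Real.sqrt n * Real.sqrt μ) * Real.sin α := h2
        _ ≤ (1 - ρ) / 2 * (Real.sqrt θ * Real.sqrt μ) := keyA
        _ ≤ (1 - ρ) / 2 * (x i * t) := mul_le_mul_of_nonneg_left hθμ' hρ2
        _ = (1 - ρ) / 2 * x i * t := by ring
    exact le_of_mul_le_mul_right h1 ht
  have hB : |xdd i| * (1 - Real.cos α) ≤ (1 - ρ) / 2 * x i := by
    have h2 := mul_le_mul_of_nonneg_right (hxdd i) hcosnn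
    have h1 : |xdd i| * (1 - Real.cos α) * t ≤ (1 - ρ) / 2 * x i * t :=
      calc |xdd i| * (1 - Real.cos α) * t
          = |xdd i| * t * (1 - Real.cos α) := by ring
        _ ≤ C3 * (n : ℝ) * Real.sqrt μ * (1 - Real.cos α) := h2
        _ ≤ (1 - ρ) / 2 * (Real.sqrt θ * Real.sqrt μ) := keyB
        _ ≤ (1 - ρ) / 2 * (x i * t) := mul_le_mul_of_nonneg_left hθμ' hρ2
        _ = (1 - ρ) / 2 * x i * t := by ring
    exact le_of_mul_le_mul_right h1 ht
  have h3 : xd i * Real.sin α ≤ |xd i| * Real.sin α :=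
    mul_le_mul_of_nonneg_right (le_abs_self _) hsin0
  have h4 : -(xdd i) * (1 - Real.cos α) ≤ |xdd i| * (1 - Real.cos α) :=
    mul_le_mul_of_nonneg_right (neg_le_abs _) hcosnn
  have hmain : ρ * x i ≤ x i - xd i * Real.sin α + xdd i * (1 - Real.cos α) := by
    linarith [hA, hB, h3, h4]
  exact ⟨hmain, lt_of_lt_of_le (by positivity) hmain⟩
end

section
/- Let n ≥ 1, μ > 0, 0 < σ_min ≤ σ ≤ σ_max ≤ 1, and C₂, C₃ > 0. Let ẋ, ṡ, ẍ, s̈ ∈ ℝⁿ satisfy |ẋᵀṡ| ≤ C₂² n μ, |ẋᵀs̈| ≤ C₂ C₃ n^{3/2} μ, and |ṡᵀẍ| ≤ C₂ C₃ n^{3/2} μ, and define μ(σ, α) = μ(1 − sin(α)) + σ μ (1 − cos(α)) − (ẋᵀṡ/n)(1 − cos(α))² − ((ẋᵀs̈ + ṡᵀẍ)/n) sin(α)(1 − cos(α)). Set C₅ = min{1, 1/(5 max{σ_max, C₂², 2 C₂ C₃})}. Then for every α ∈ [0, π/2] with sin(α) ≤ C₅ / n^{1/4}: μ(σ, α) ≤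 μ (1 − sin(α)/4). -/
open Matrix

/-- Arithmetic core of Lemma 4.8. -/
lemma duality_measure_decrease_core (μ σ M q s c A' B' : ℝ)
    (hμ : 0 < μ) (hσ0 : 0 ≤ σ) (hσM : σ ≤ M) (hM0 : 0 < M)
    (hs0 : 0 ≤ s) (hc0 : 0 ≤ c) (hc1 : c ≤ 1) (hpyth : s ^ 2 + c ^ 2 = 1)
    (hq1 : 1 ≤ q) (hsq1 : s * q ≤ 1) (hsq2 : 5 * M * (s * q) ≤ 1)
    (hAN : -A' ≤ M * μ) (hBN : -B' ≤ M * q ^ 2 * μ) :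
    μ * (1 - s) + σ * μ * (1 - c) - A' * (1 - c) ^ 2 - B' * s * (1 - c) ≤
      μ * (1 - s / 4) := by
  have h1c0 : 0 ≤ 1 - c := by linarith
  have h1c : 1 - c ≤ s ^ 2 := by nlinarith
  have hq0 : 0 < q := by linarith
  have hs1 : s ≤ 1 := by nlinarith
  have hMs : 5 * M * s ≤ 1 := by nlinarith
  have hMsq : M * s ^ 2 ≤ s / 5 := by
    nlinarith [mul_le_mul_of_nonneg_right hMs hs0]
  have hT1 : σ * μ * (1 - c) ≤ μ * (s / 5) := by
    have ha : σ * (1 - c) ≤ M * s ^ 2 := mul_le_mul hσM h1c h1c0 (le_of_lt hM0)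
    have := mul_le_mul_of_nonneg_left (le_trans ha hMsq) (le_of_lt hμ)
    nlinarith [this]
  have hT2 : -A' * (1 - c) ^ 2 ≤ μ * (s / 5) := by
    have h1c2 : (1 - c) ^ 2 ≤ s ^ 2 := by nlinarith
    have hstep : -A' * (1 - c) ^ 2 ≤ M * μ * s ^ 2 := by
      rcases le_or_gt (-A') 0 with h | h
      · have h0 : -A' * (1 - c) ^ 2 ≤ 0 :=
          mul_nonpos_of_nonpos_of_nonneg h (sq_nonneg _)
        have hp : 0 ≤ M * μ * s ^ 2 := by positivity
        linarith
      · exact mul_le_mul hAN h1c2 (sq_nonneg _) (by positivity)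
    linarith [mul_le_mul_of_nonneg_left hMsq (le_of_lt hμ)]
  have hT3 : -B' * s * (1 - c) ≤ μ * (s / 5) := by
    have hs1c : 0 ≤ s * (1 - c) := mul_nonneg hs0 h1c0
    have hs1c' : s * (1 - c) ≤ s ^ 3 := by nlinarith
    have hstep : -B' * (s * (1 - c)) ≤ M * q ^ 2 * μ * s ^ 3 := by
      rcases le_or_gt (-B') 0 with h | h
      · have h0 : -B' * (s * (1 - c)) ≤ 0 :=
          mul_nonpos_of_nonpos_of_nonneg h hs1c
        have hp : 0 ≤ M * q ^ 2 * μ * s ^ 3 := by positivity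
        linarith
      · have h1 : -B' * (s * (1 - c)) ≤ M * q ^ 2 * μ * (s * (1 - c)) :=
          mul_le_mul_of_nonneg_right hBN hs1c
        have h2 : M * q ^ 2 * μ * (s * (1 - c)) ≤ M * q ^ 2 * μ * s ^ 3 := by
          have : 0 ≤ M * q ^ 2 * μ := by positivity
          exact mul_le_mul_of_nonneg_left hs1c' this
        linarith
    have hkey : M * q ^ 2 * μ * s ^ 3 ≤ μ * (s / 5) := by
      have hsqs : 0 ≤ (s * q) * s := by positivity
      have h2 : (s * q) * s ≤ 1 * s := mul_le_mul_of_nonneg_right hsq1 hs0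
      have h1 : 5 * M * (s * q) * ((s * q) * s) ≤ 1 * (1 * s) :=
        mul_le_mul hsq2 h2 hsqs (by norm_num)
      linarith [mul_le_mul_of_nonneg_left h1 (le_of_lt hμ)]
    calc -B' * s * (1 - c) = -B' * (s * (1 - c)) := by ring
    _ ≤ M * q ^ 2 * μ * s ^ 3 := hstep
    _ ≤ μ * (s / 5) := hkey
  linarith [mul_nonneg (le_of_lt hμ) hs0]

/-- Lemma 4.8: for step sizes with `sin(α) ≤ C₅/n^{1/4}`, where
`C₅ = min{1, 1/(5 max{σ_max, C₂², 2C₂C₃})}`, the updated duality measure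
satisfies `μ(σ, α) ≤ μ(1 − sin(α)/4)`. -/
theorem duality_measure_decrease {n : ℕ} (hn : 1 ≤ n)
    (μ σ σmin σmax C2 C3 : ℝ)
    (hμ : 0 < μ) (hσmin : 0 < σmin) (hσ1 : σmin ≤ σ) (hσ2 : σ ≤ σmax)
    (hσmax : σmax ≤ 1) (hC2 : 0 < C2) (hC3 : 0 < C3)
    (xd sd xdd sdd : Fin n → ℝ)
    (h1 : |xd ⬝ᵥ sd| ≤ C2 ^ 2 * n * μ)
    (h2 : |xd ⬝ᵥ sdd| ≤ C2 * C3 * (n : ℝ) ^ ((3 : ℝ) / 2) * μ)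
    (h3 : |sd ⬝ᵥ xdd| ≤ C2 * C3 * (n : ℝ) ^ ((3 : ℝ) / 2) * μ) :
    ∀ α : ℝ, 0 ≤ α → α ≤ Real.pi / 2 →
      Real.sin α ≤
        min 1 (1 / (5 * max σmax (max (C2 ^ 2) (2 * C2 * C3)))) /
          (n : ℝ) ^ ((1 : ℝ) / 4) →
      μ * (1 - Real.sin α) + σ * μ * (1 - Real.cos α)
          - (xd ⬝ᵥ sd / n) * (1 - Real.cos α) ^ 2
          - ((xd ⬝ᵥ sdd + sd ⬝ᵥ xdd) / n) * Real.sin α * (1 - Real.cos α) ≤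
        μ * (1 - Real.sin α / 4) := by
  intro α hα0 hα2 hsin
  have hπ := Real.pi_pos
  set s := Real.sin α with hs_def
  set c := Real.cos α with hc_def
  have hs0 : 0 ≤ s := Real.sin_nonneg_of_nonneg_of_le_pi hα0 (by linarith)
  have hc0 : 0 ≤ c := Real.cos_nonneg_of_mem_Icc ⟨by linarith, hα2⟩
  have hc1 : c ≤ 1 := Real.cos_le_one α
  have hpyth : s ^ 2 + c ^ 2 = 1 := Real.sin_sq_add_cos_sq α
  set M : ℝ := max σmax (max (C2 ^ 2) (2 * C2 * C3)) with hM_def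
  have hMσ : σmax ≤ M := le_max_left _ _
  have hMC2 : C2 ^ 2 ≤ M := le_trans (le_max_left _ _) (le_max_right _ _)
  have hMC3 : 2 * C2 * C3 ≤ M := le_trans (le_max_right _ _) (le_max_right _ _)
  have hM0 : 0 < M := lt_of_lt_of_le (pow_pos hC2 2) hMC2
  set N : ℝ := (n : ℝ) with hN_def
  have hN1 : (1 : ℝ) ≤ N := by rw [hN_def]; exact_mod_cast hn
  have hN0 : 0 < N := by linarith
  set q : ℝ := N ^ ((1 : ℝ) / 4) with hq_def
  have hq1 : 1 ≤ q := Real.one_le_rpow hN1 (by norm_num)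
  have hq0 : 0 < q := by linarith
  have hq4 : q ^ 4 = N := by
    rw [hq_def, ← Real.rpow_natCast (N ^ ((1:ℝ)/4)) 4,
      ← Real.rpow_mul (le_of_lt hN0)]
    norm_num
  have hq6 : q ^ 6 = N ^ ((3 : ℝ) / 2) := by
    rw [hq_def, ← Real.rpow_natCast (N ^ ((1:ℝ)/4)) 6,
      ← Real.rpow_mul (le_of_lt hN0)]
    norm_num
  -- bounds on s
  have hsq : s * q ≤ min 1 (1 / (5 * M)) := by
    have h := mul_le_mul_of_nonneg_right hsin (le_of_lt hq0)
    calc s * q ≤ min 1 (1 / (5 * M)) / q * q := h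
    _ = min 1 (1 / (5 * M)) := by field_simp
  have hsq1 : s * q ≤ 1 := le_trans hsq (min_le_left _ _)
  have hsq2 : 5 * M * (s * q) ≤ 1 := by
    have h := le_trans hsq (min_le_right _ _)
    have h5M : 0 < 5 * M := by linarith
    calc 5 * M * (s * q) ≤ 5 * M * (1 / (5 * M)) :=
          mul_le_mul_of_nonneg_left h (le_of_lt h5M)
    _ = 1 := by field_simp
  -- dot product bounds
  set A : ℝ := xd ⬝ᵥ sd with hA_def
  set B : ℝ := xd ⬝ᵥ sdd + sd ⬝ᵥ xdd with hB_def
  clear_value s c M N q A B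
  have hA : -A ≤ C2 ^ 2 * N * μ := by
    have := (abs_le.mp h1).1; linarith
  have hB : -B ≤ 2 * C2 * C3 * N ^ ((3:ℝ)/2) * μ := by
    have h2' := (abs_le.mp h2).1
    have h3' := (abs_le.mp h3).1
    rw [hB_def]; ring_nf; ring_nf at h2' h3'; linarith
  have hAN : -(A / N) ≤ M * μ := by
    rw [← neg_div, div_le_iff₀ hN0]
    have hstep : C2 ^ 2 * N * μ ≤ M * N * μ :=
      mul_le_mul_of_nonneg_right
        (mul_le_mul_of_nonneg_right hMC2 (le_of_lt hN0)) (le_of_lt hμ)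
    calc -A ≤ M * N * μ := le_trans hA hstep
    _ = M * μ * N := by ring
  have hBN : -(B / N) ≤ M * q ^ 2 * μ := by
    rw [← neg_div, div_le_iff₀ hN0]
    have hN32 : N ^ ((3:ℝ)/2) = q ^ 2 * N := by rw [← hq6, ← hq4]; ring
    have hq2N : (0:ℝ) ≤ q ^ 2 * N := by positivity
    have hstep : 2 * C2 * C3 * (q ^ 2 * N) * μ ≤ M * (q ^ 2 * N) * μ :=
      mul_le_mul_of_nonneg_right
        (mul_le_mul_of_nonneg_right hMC3 hq2N) (le_of_lt hμ)
    calc -B ≤ 2 * C2 * C3 * N ^ ((3:ℝ)/2) * μ := hB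
    _ = 2 * C2 * C3 * (q ^ 2 * N) * μ := by rw [hN32]
    _ ≤ M * (q ^ 2 * N) * μ := hstep
    _ = M * q ^ 2 * μ * N := by ring
  have hσ0 : (0:ℝ) ≤ σ := le_of_lt (lt_of_lt_of_le hσmin hσ1)
  have hσM : σ ≤ M := le_trans hσ2 hMσ
  have := duality_measure_decrease_core μ σ M q s c (A / N) (B / N)
    hμ hσ0 hσM hM0 hs0 hc0 hc1 hpyth hq1 hsq1 hsq2 hAN hBN
  linarith
end

section
/- Let θ ∈ (0, 1), σ ∈ ℝ, μ > 0, α ∈ [0, π/2], and let x, s, ẋ, ṡ, ẍ, s̈ ∈ ℝⁿ have x, s componentwise positive with x_i s_i ≥ θ μ for every i, and satisfy s ∘ ẋ + x ∘ ṡ = x ∘ s and s ∘ ẍ + x ∘ s̈ = −2 ẋ ∘ ṡ + σ μ e. Define x(α) = x − ẋ sin(α) + ẍ (1 − cos(α)), s(α) = s − ṡ sin(α) + s̈ (1 − cos(α)), and μ(σ, α) = μ(1 − sin(α)) + σ μ (1 − cos(α)) − (ẋᵀṡ/n)(1 − cos(α))² − ((ẋᵀs̈ + ṡᵀẍ)/n)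 sin(α)(1 − cos(α)). If for an index i the inequality σ μ (1 − θ) − [ẍ_i ṡ_i + ẋ_i s̈_i − θ (ẋᵀs̈ + ṡᵀẍ)/n] sin(α) + [ẍ_i s̈_i − ẋ_i ṡ_i + θ (ẋᵀṡ)/n] (1 − cos(α)) ≥ 0 holds, then x_i(α) s_i(α) ≥ θ μ(σ, α). -/
open Matrix

/-- The sufficient condition (4.21) in the proof of Lemma 4.9: if the stated
inequality holds for index `i`, then the updated products stay in the
central-path neighborhood, `x_i(α) s_i(α) ≥ θ μ(σ, α)`. -/
theorem neighborhood_condition {n : ℕ} (hn : 0 < n)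
    (θ σ μ α : ℝ) (hθ : θ ∈ Set.Ioo (0 : ℝ) 1) (hμ : 0 < μ)
    (hα0 : 0 ≤ α) (hα1 : α ≤ Real.pi / 2)
    (x s xd sd xdd sdd : Fin n → ℝ)
    (hx : ∀ i, 0 < x i) (hs : ∀ i, 0 < s i)
    (hxs : ∀ i, θ * μ ≤ x i * s i)
    (h1 : ∀ i, s i * xd i + x i * sd i = x i * s i)
    (h2 : ∀ i, s i * xdd i + x i * sdd i = -2 * (xd i * sd i) + σ * μ)
    (i : Fin n)
    (hcond :
      σ * μ * (1 - θ)
        - (xdd i * sd i + xd i * sdd i - θ * ((xd ⬝ᵥ sdd + sd ⬝ᵥ xdd) / n)) *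
            Real.sin α
        + (xdd i * sdd i - xd i * sd i + θ * (xd ⬝ᵥ sd / n)) *
            (1 - Real.cos α) ≥ 0) :
    (x i - xd i * Real.sin α + xdd i * (1 - Real.cos α)) *
        (s i - sd i * Real.sin α + sdd i * (1 - Real.cos α)) ≥
      θ * (μ * (1 - Real.sin α) + σ * μ * (1 - Real.cos α)
        - (xd ⬝ᵥ sd / n) * (1 - Real.cos α) ^ 2
        - ((xd ⬝ᵥ sdd + sd ⬝ᵥ xdd) / n) * Real.sin α * (1 - Real.cos α)) := by
  set S := Real.sin α with hSdef
  set C := Real.cos α with hCdef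
  set a : ℝ := xd ⬝ᵥ sd / n
  set b : ℝ := (xd ⬝ᵥ sdd + sd ⬝ᵥ xdd) / n
  have hpyth : S ^ 2 + C ^ 2 = 1 := Real.sin_sq_add_cos_sq α
  have hS1 : S ≤ 1 := Real.sin_le_one α
  have hC1 : C ≤ 1 := Real.cos_le_one α
  have hC0 : 0 ≤ C := Real.cos_nonneg_of_mem_Icc ⟨by linarith [Real.pi_pos], hα1⟩
  have key :
      (x i - xd i * S + xdd i * (1 - C)) * (s i - sd i * S + sdd i * (1 - C)) -
        θ * (μ * (1 - S) + σ * μ * (1 - C) - a * (1 - C) ^ 2 - b * S * (1 - C)) =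
      (x i * s i - θ * μ) * (1 - S) +
        (1 - C) * (σ * μ * (1 - θ)
          - (xdd i * sd i + xd i * sdd i - θ * b) * S
          + (xdd i * sdd i - xd i * sd i + θ * a) * (1 - C)) := by
    linear_combination (-S) * h1 i + (1 - C) * h2 i + (xd i * sd i) * hpyth
  nlinarith [mul_nonneg (sub_nonneg.mpr (hxs i)) (sub_nonneg.mpr hS1),
    mul_nonneg (sub_nonneg.mpr hC1) hcond]
end

section
/- Let ρ ∈ (0, 1), β > 0, c > 0, and n ≥ 1. Suppose sequences x^k, s^k ∈ ℝⁿ (componentwise positive), ν_k > 0, and α_k ∈ (0, π/2] satisfy, for all k ≥ 0: ν_{k+1} = ν_k (1 − sin(α_k)); min_i x_i^k ≥ β ν_k and min_i s_i^k ≥ β ν_k; x_i^{k+1} ≥ φ_k and s_i^{k+1} ≥ ψ_k for every i, where φ_k = min{ρ · min_i x_i^k, ν_k} and ψ_k = min{ρ · min_i s_i^k, ν_k}; and ν_k² / μ_k ≥ c, where μ_k = (x^k)ᵀ s^k / n. Then, with γ = min{1, ρβ} and θ = γ² c, one has x_i^k s_i^k ≥ θ μ_k for every i and every k ≥ 1.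 -/
open Matrix

/-- Lemma 5.1: if `ν_k²/μ_k` stays bounded below by `c > 0`, the iterates of
Algorithm 2 automatically remain in the central-path neighborhood
`x^k ∘ s^k ≥ θ μ_k e` with `θ = γ² c`, `γ = min{1, ρβ}`. -/
theorem algorithm2_neighborhood {n : ℕ} (hn : 1 ≤ n)
    (ρ β c : ℝ) (hρ : ρ ∈ Set.Ioo (0 : ℝ) 1) (hβ : 0 < β) (hc : 0 < c)
    (x s : ℕ → Fin n → ℝ) (ν α : ℕ → ℝ)
    (hx : ∀ k i, 0 < x k i) (hs : ∀ k i, 0 < s k i)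
    (hν : ∀ k, 0 < ν k)
    (hα : ∀ k, α k ∈ Set.Ioc (0 : ℝ) (Real.pi / 2))
    (hνrec : ∀ k, ν (k + 1) = ν k * (1 - Real.sin (α k)))
    (hxlb : ∀ k i, β * ν k ≤ x k i)
    (hslb : ∀ k i, β * ν k ≤ s k i)
    (hxstep : ∀ k i, x (k + 1) i ≥ min (ρ * ⨅ j, x k j) (ν k))
    (hsstep : ∀ k i, s (k + 1) i ≥ min (ρ * ⨅ j, s k j) (ν k))
    (hνμ : ∀ k, c ≤ ν k ^ 2 / (x k ⬝ᵥ s k / n)) :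
    ∀ k : ℕ, 1 ≤ k → ∀ i,
      (min 1 (ρ * β)) ^ 2 * c * (x k ⬝ᵥ s k / n) ≤ x k i * s k i := by
  intro k hk i
  haveI : Nonempty (Fin n) := ⟨⟨0, hn⟩⟩
  obtain ⟨j, rfl⟩ : ∃ j, k = j + 1 := ⟨k - 1, by omega⟩
  set γ : ℝ := min 1 (ρ * β) with hγdef
  have hγpos : 0 < γ := lt_min one_pos (mul_pos hρ.1 hβ)
  -- lower bound on iterates at step j+1
  have key : ∀ (y : ℕ → Fin n → ℝ), (∀ k i, β * ν k ≤ y k i) →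
      (∀ i, y (j + 1) i ≥ min (ρ * ⨅ m, y j m) (ν j)) → γ * ν j ≤ y (j + 1) i := by
    intro y hylb hystep
    have h1 : β * ν j ≤ ⨅ m, y j m := le_ciInf (fun m => hylb j m)
    have h2 : ρ * β * ν j ≤ ρ * ⨅ m, y j m := by
      rw [mul_assoc]; exact mul_le_mul_of_nonneg_left h1 hρ.1.le
    calc γ * ν j ≤ min (ρ * ⨅ m, y j m) (ν j) := by
          apply le_min
          · exact le_trans (mul_le_mul_of_nonneg_right (min_le_right _ _) (hν j).le) h2
          · exact le_trans (mul_le_mul_of_nonneg_right (min_le_left _ _) (hν j).le)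
              (le_of_eq (one_mul _))
      _ ≤ y (j + 1) i := hystep i
  have hxk : γ * ν j ≤ x (j + 1) i := key x hxlb (hxstep j)
  have hsk : γ * ν j ≤ s (j + 1) i := key s hslb (hsstep j)
  -- ν (j+1) ≤ ν j
  have hsin : 0 ≤ Real.sin (α j) :=
    Real.sin_nonneg_of_nonneg_of_le_pi (hα j).1.le
      (le_trans (hα j).2 (by linarith [Real.pi_pos]))
  have hνle : ν (j + 1) ≤ ν j := by
    rw [hνrec j]
    nlinarith [hν j]
  -- μ positive
  have hμpos : 0 < x (j + 1) ⬝ᵥ s (j + 1) / n := by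
    apply div_pos
    · apply Finset.sum_pos (fun m _ => mul_pos (hx _ m) (hs _ m))
      exact Finset.univ_nonempty
    · exact_mod_cast Nat.lt_of_lt_of_le Nat.zero_lt_one hn
  have hcμ : c * (x (j + 1) ⬝ᵥ s (j + 1) / n) ≤ ν (j + 1) ^ 2 :=
    (le_div_iff₀ hμpos).mp (hνμ (j + 1))
  calc γ ^ 2 * c * (x (j + 1) ⬝ᵥ s (j + 1) / n)
      = γ ^ 2 * (c * (x (j + 1) ⬝ᵥ s (j + 1) / n)) := by ring
    _ ≤ γ ^ 2 * ν (j + 1) ^ 2 := by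
        exact mul_le_mul_of_nonneg_left hcμ (sq_nonneg γ)
    _ ≤ γ ^ 2 * ν j ^ 2 := by
        apply mul_le_mul_of_nonneg_left _ (sq_nonneg γ)
        exact pow_le_pow_left₀ (hν (j + 1)).le hνle 2
    _ = (γ * ν j) * (γ * ν j) := by ring
    _ ≤ x (j + 1) i * s (j + 1) i :=
        mul_le_mul hxk hsk (mul_pos hγpos (hν j)).le (le_trans (mul_pos hγpos (hν j)).le hxk)
end
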